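/- arXiv:math/0409408 — 5 statements merged into one kernel-verified Lean document; each statement's English description precedes it below -/
import Mathlib

section
/- Let f : ℕ → ℕ be any weakly increasing sequence with f(n) ≤ n, and define f' inductively by f'(0) = 0 and f'(n) = min(f(n), 1 + f'(n-1)). Then f' is regular, and the Grundy sequences for Maximum Nim with rules f and f' coincide: if g(n) = mex { g(n-i) : 1 ≤ i ≤ f(n) } and g'(n) = mex { g'(n-i) : 1 ≤ i ≤ f'(n) }, then g(n) = g'(n) for all n. -/
open Classical

noncomputable section

/-- The minimal excludant of a set of naturals. -/
def mex (S : Set ℕ) : ℕ := sInf {v | v ∉ S}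

/-- A rule sequence is regular if `f 0 = 0`, `f n ≤ n`, and `f` increases by 0 or 1. -/
def Regular (f : ℕ → ℕ) : Prop :=
  f 0 = 0 ∧ (∀ n, f n ≤ n) ∧ ∀ n, f n ≤ f (n + 1) ∧ f (n + 1) ≤ f n + 1

/-- `g` is the Grundy sequence for Maximum Nim with rule `f`:
`g n = mex { g (n - i) : 1 ≤ i ≤ f n }`. -/
def MaxNimGrundy (f g : ℕ → ℕ) : Prop :=
  ∀ n, g n = mex {v | ∃ i, 1 ≤ i ∧ i ≤ f n ∧ g (n - i) = v}

/-- `h` is the Grundy sequence for Minimum Nim with rule `f`: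
`h n = mex { h i : 0 ≤ i ≤ n - f n - 1 }`. -/
def MinNimGrundy (f h : ℕ → ℕ) : Prop :=
  ∀ n, h n = mex {v | ∃ i, i + f n + 1 ≤ n ∧ h i = v}

/-- Every natural number occurs infinitely often. -/
def Infinitive (g : ℕ → ℕ) : Prop := ∀ k, {n | g n = k}.Infinite

/-- The position of the first occurrence of `k` in `g`. -/
def firstOcc (g : ℕ → ℕ) (k : ℕ) : ℕ := sInf {n | g n = k}

/-- `n` is not the first occurrence of its value in `g`. -/
def NotFirst (g : ℕ → ℕ) (n : ℕ) : Prop := ∃ m < n, g m = g n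

/-- The subsequence of `g` obtained by deleting the first occurrence of each value. -/
def Lam (g : ℕ → ℕ) : ℕ → ℕ := fun m => g (Nat.nth (NotFirst g) m)

/-- Kimberling's fractal sequences: infinitive, first occurrences in increasing
order of value (F2), and deleting first occurrences leaves the sequence unchanged (F3). -/
def Fractal (g : ℕ → ℕ) : Prop :=
  Infinitive g ∧
  (∀ j k, j < k → firstOcc g j < firstOcc g k) ∧
  (∀ m, Lam g m = g m)

/-- The restriction `g|M`: the subsequence of terms of `g` lying in `M`. -/
def restrictSeq (g : ℕ → ℕ) (M : Set ℕ) : ℕ → ℕ :=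
  fun m => g (Nat.nth (fun n => g n ∈ M) m)

/-- An interspersion: an infinitive sequence such that for `i < j` the restriction
`g|{i,j}` is an initial block of `i`'s followed by strict alternation `j, i, j, i, ...`. -/
def Interspersion (g : ℕ → ℕ) : Prop :=
  Infinitive g ∧ ∀ i j, i < j → ∃ N,
    (∀ n < N, restrictSeq g {i, j} n = i) ∧
    ∀ n, restrictSeq g {i, j} (N + 2 * n) = j ∧
         restrictSeq g {i, j} (N + 2 * n + 1) = i

/-- `striangle g i j`: the number of occurrences of `i` strictly before the first
occurrence of `j`, not counting the occurrence `g 0 = 0` when `i = 0`. -/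
def striangle (g : ℕ → ℕ) (i j : ℕ) : ℕ :=
  Set.ncard {n | g n = i ∧ n < firstOcc g j ∧ (i = 0 → n ≠ 0)}

/-- A subadditive triangle: `s i j + s j k - 1 ≤ s i k ≤ s i j + s j k` for `i < j < k`. -/
def SubadditiveTriangle (s : ℕ → ℕ → ℕ) : Prop :=
  ∀ i j k, i < j → j < k →
    s i j + s j k ≤ s i k + 1 ∧ s i k ≤ s i j + s j k

lemma mex_eq_of {S : Set ℕ} {k : ℕ} (h1 : k ∉ S) (h2 : ∀ j < k, j ∈ S) : mex S = k := by
  have hk : k ∈ {v | v ∉ S} := h1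
  refine le_antisymm (Nat.sInf_le hk) ?_
  by_contra h
  push_neg at h
  have hm := Nat.sInf_mem (⟨k, hk⟩ : {v | v ∉ S}.Nonempty)
  exact hm (h2 _ h)

lemma window_eq (G : ℕ → ℕ) (c n : ℕ) (hc : c ≤ n) :
    {v | ∃ i, 1 ≤ i ∧ i ≤ c ∧ G (n - i) = v} = ↑((Finset.Ico (n - c) n).image G) := by
  ext v
  simp only [Set.mem_setOf_eq, Finset.coe_image, Set.mem_image, Finset.mem_coe, Finset.mem_Ico]
  constructor
  · rintro ⟨i, h1, h2, rfl⟩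
    exact ⟨n - i, ⟨Nat.sub_le_sub_left h2 n, by omega⟩, rfl⟩
  · rintro ⟨t, ⟨ht1, ht2⟩, rfl⟩
    exact ⟨n - t, by omega, by omega, by rw [Nat.sub_sub_self (le_of_lt ht2)]⟩

section

variable {f f' g g' : ℕ → ℕ}

lemma f'_le_f (hle : ∀ n, f n ≤ n) (hf'0 : f' 0 = 0)
    (hf' : ∀ n, f' (n + 1) = min (f (n + 1)) (1 + f' n)) : ∀ n, f' n ≤ f n := by
  intro n
  cases n with
  | zero => simp [hf'0]
  | succ m => rw [hf' m]; exact min_le_left _ _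

lemma f'_le_self (hf'0 : f' 0 = 0)
    (hf' : ∀ n, f' (n + 1) = min (f (n + 1)) (1 + f' n)) : ∀ n, f' n ≤ n := by
  intro n
  induction n with
  | zero => simp [hf'0]
  | succ m ih => rw [hf' m]; have := min_le_right (f (m+1)) (1 + f' m); omega

lemma f'_mono (hmono : Monotone f) (hle : ∀ n, f n ≤ n) (hf'0 : f' 0 = 0)
    (hf' : ∀ n, f' (n + 1) = min (f (n + 1)) (1 + f' n)) : Monotone f' := by
  apply monotone_nat_of_le_succ
  intro n
  rw [hf' n]
  exact le_min ((f'_le_f hle hf'0 hf' n).trans (hmono (Nat.le_succ n))) (by omega)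

lemma invariant (hmono : Monotone f) (hle : ∀ n, f n ≤ n) (hf'0 : f' 0 = 0)
    (hf' : ∀ n, f' (n + 1) = min (f (n + 1)) (1 + f' n))
    (hg' : MaxNimGrundy f' g') :
    ∀ n, (Finset.Icc (n - f' n) n).image g' = Finset.Iic (f' n) := by
  intro n
  induction n with
  | zero =>
    have h0 : g' 0 = 0 := by
      rw [hg' 0]
      apply mex_eq_of
      · rintro ⟨i, h1, h2, -⟩
        rw [hf'0] at h2; omega
      · omega
    simp [hf'0, h0]
    ext t; simp
  | succ n ih =>
    have hcle : f' n ≤ n := f'_le_self hf'0 hf' n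
    have hc1le : f' (n + 1) ≤ n + 1 := f'_le_self hf'0 hf' (n + 1)
    have hmono' := f'_mono hmono hle hf'0 hf'
    have hup : f' n ≤ f' (n + 1) := hmono' (Nat.le_succ n)
    have hup2 : f' (n + 1) ≤ 1 + f' n := by rw [hf' n]; exact min_le_right _ _
    have hgn1 : g' (n + 1) = mex ↑((Finset.Ico (n + 1 - f' (n + 1)) (n + 1)).image g') := by
      rw [hg' (n + 1), window_eq g' _ _ hc1le]
    rcases (by omega : f' (n + 1) = f' n + 1 ∨ f' (n + 1) = f' n) with h | h
    · -- increase case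
      have hico : Finset.Ico (n + 1 - f' (n + 1)) (n + 1) = Finset.Icc (n - f' n) n := by
        rw [h, Nat.succ_sub_succ, Finset.Ico_add_one_right_eq_Icc]
      have hval : g' (n + 1) = f' n + 1 := by
        rw [hgn1, hico, ih]
        apply mex_eq_of
        · simp
        · intro j hj; simp; omega
      rw [h, Nat.succ_sub_succ]
      have h1 : Finset.Icc (n - f' n) (n + 1) = insert (n + 1) (Finset.Icc (n - f' n) n) := by
        ext t; simp only [Finset.mem_Icc, Finset.mem_insert]; omega
      have h2 : insert (f' n + 1) (Finset.Iic (f' n)) = Finset.Iic (f' n + 1) := by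
        ext t; simp only [Finset.mem_Iic, Finset.mem_insert]; omega
      rw [h1, Finset.image_insert, ih, hval, h2]
    · -- slide case
      set c := f' n with hc
      have hinj : Set.InjOn g' (Finset.Icc (n - c) n) := by
        apply Finset.injOn_of_card_image_eq
        rw [ih, Nat.card_Iic, Nat.card_Icc]
        omega
      set b := g' (n - c) with hbdef
      have hbmem : b ∈ Finset.Iic c := by
        rw [← ih]
        exact Finset.mem_image_of_mem g' (by simp [Finset.mem_Icc])
      have hbc : b ≤ c := Finset.mem_Iic.mp hbmem
      have himg : (Finset.Ico (n + 1 - c) (n + 1)).image g' = Finset.Iic c \ {b} := by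
        ext v
        simp only [Finset.mem_image, Finset.mem_Ico, Finset.mem_sdiff, Finset.mem_Iic,
          Finset.mem_singleton]
        constructor
        · rintro ⟨t, ⟨ht1, ht2⟩, rfl⟩
          have htm : t ∈ Finset.Icc (n - c) n := by simp [Finset.mem_Icc]; omega
          constructor
          · have : g' t ∈ Finset.Iic c := by rw [← ih]; exact Finset.mem_image_of_mem g' htm
            exact Finset.mem_Iic.mp this
          · intro hvb
            have : t = n - c := hinj htm (by simp [Nat.sub_le]) hvb
            omega
        · rintro ⟨hv1, hv2⟩
          have : v ∈ (Finset.Icc (n - c) n).image g' := by rw [ih]; exact Finset.mem_Iic.mpr hv1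
          obtain ⟨t, htm, rfl⟩ := Finset.mem_image.mp this
          simp only [Finset.mem_Icc] at htm
          have hne : t ≠ n - c := by intro he; exact hv2 (by rw [he])
          refine ⟨t, ?_, rfl⟩
          omega
      have hval : g' (n + 1) = b := by
        rw [hgn1, h, himg]
        apply mex_eq_of
        · simp
        · intro j hj
          simp only [Finset.coe_sdiff, Finset.coe_singleton, Set.mem_diff, Finset.mem_coe,
            Finset.mem_Iic, Set.mem_singleton_iff]
          omega
      rw [h]
      show Finset.image g' (Finset.Icc (n + 1 - c) (n + 1)) = Finset.Iic c
      have hsplit : Finset.Icc (n + 1 - c) (n + 1) = insert (n + 1) (Finset.Icc (n + 1 - c) n) := by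
        ext t; simp only [Finset.mem_Icc, Finset.mem_insert]; omega
      have hico2 : Finset.Icc (n + 1 - c) n = Finset.Ico (n + 1 - c) (n + 1) := by
        rw [Finset.Ico_add_one_right_eq_Icc]
      rw [hsplit, Finset.image_insert, hico2, himg, hval]
      rw [Finset.sdiff_singleton_eq_erase, Finset.insert_erase hbmem]

lemma g'_le (hmono : Monotone f) (hle : ∀ n, f n ≤ n) (hf'0 : f' 0 = 0)
    (hf' : ∀ n, f' (n + 1) = min (f (n + 1)) (1 + f' n))
    (hg' : MaxNimGrundy f' g') (n : ℕ) : g' n ≤ f' n := by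
  have hinv := invariant hmono hle hf'0 hf' hg' n
  have : g' n ∈ Finset.Iic (f' n) := by
    rw [← hinv]
    exact Finset.mem_image_of_mem g' (by simp [Finset.mem_Icc, Nat.sub_le])
  exact Finset.mem_Iic.mp this

lemma g'_inc (hmono : Monotone f) (hle : ∀ n, f n ≤ n) (hf'0 : f' 0 = 0)
    (hf' : ∀ n, f' (n + 1) = min (f (n + 1)) (1 + f' n))
    (hg' : MaxNimGrundy f' g') (n : ℕ) (h : f' (n + 1) = f' n + 1) :
    g' (n + 1) = f' (n + 1) := by
  have hc1le : f' (n + 1) ≤ n + 1 := f'_le_self hf'0 hf' (n + 1)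
  have hico : Finset.Ico (n + 1 - f' (n + 1)) (n + 1) = Finset.Icc (n - f' n) n := by
    rw [h, Nat.succ_sub_succ, Finset.Ico_add_one_right_eq_Icc]
  rw [hg' (n + 1), window_eq g' _ _ hc1le, hico, invariant hmono hle hf'0 hf' hg' n, h]
  apply mex_eq_of
  · simp
  · intro j hj; simp; omega

/-- regularization of a weakly increasing rule does not change the
Grundy sequence. -/
theorem maxNim_regularization (f f' g g' : ℕ → ℕ)
    (hmono : Monotone f) (hle : ∀ n, f n ≤ n)
    (hf'0 : f' 0 = 0) (hf' : ∀ n, f' (n + 1) = min (f (n + 1)) (1 + f' n))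
    (hg : MaxNimGrundy f g) (hg' : MaxNimGrundy f' g') :
    Regular f' ∧ ∀ n, g n = g' n := by
  have hf'self := f'_le_self hf'0 hf'
  have hf'f := f'_le_f hle hf'0 hf'
  have hf'mono := f'_mono hmono hle hf'0 hf'
  constructor
  · refine ⟨hf'0, hf'self, fun n => ⟨hf'mono (Nat.le_succ n), ?_⟩⟩
    rw [hf' n]
    have := min_le_right (f (n + 1)) (1 + f' n)
    omega
  · intro n
    induction n using Nat.strong_induction_on with
    | _ n ih =>
      set T' : Set ℕ := {v | ∃ i, 1 ≤ i ∧ i ≤ f' n ∧ g' (n - i) = v} with hT'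
      set T : Set ℕ := {v | ∃ i, 1 ≤ i ∧ i ≤ f n ∧ g' (n - i) = v} with hT
      have hTsub : T' ⊆ T := by
        rintro v ⟨i, h1, h2, h3⟩
        exact ⟨i, h1, h2.trans (hf'f n), h3⟩
      have hgT : g n = mex T := by
        rw [hg n]
        congr 1
        ext v
        simp only [hT, Set.mem_setOf_eq]
        constructor
        · rintro ⟨i, h1, h2, rfl⟩
          refine ⟨i, h1, h2, ?_⟩
          rw [ih (n - i) (by have := hle n; omega)]
        · rintro ⟨i, h1, h2, rfl⟩
          refine ⟨i, h1, h2, ?_⟩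
          rw [ih (n - i) (by have := hle n; omega)]
      have hg'T : g' n = mex T' := hg' n
      have haT' : g' n ∉ T' := by
        have hne : {v | v ∉ T'}.Nonempty := by
          refine ⟨n + 1, ?_⟩
          rintro ⟨i, h1, h2, h3⟩
          have := g'_le hmono hle hf'0 hf' hg' (n - i)
          have := hf'self (n - i)
          omega
        have := Nat.sInf_mem hne
        rwa [← mex, ← hg'T] at this
      have hlow : ∀ j < g' n, j ∈ T' := by
        intro j hj
        by_contra hjn
        have : mex T' ≤ j := Nat.sInf_le hjn
        rw [← hg'T] at this
        omega
      have haT : g' n ∉ T := by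
        rintro ⟨i, h1, h2, h3⟩
        by_cases hi : i ≤ f' n
        · exact haT' ⟨i, h1, hi, h3⟩
        · push_neg at hi
          -- f' n < i ≤ f n, so n ≥ 1 and f' n < f n
          have hn1 : 1 ≤ n := by
            by_contra hn
            push_neg at hn
            interval_cases n
            have := hle 0
            omega
          obtain ⟨m, rfl⟩ : ∃ m, n = m + 1 := ⟨n - 1, by omega⟩
          have hlt : f' (m + 1) < f (m + 1) := lt_of_lt_of_le hi h2
          have hstep : f' (m + 1) = f' m + 1 := by
            have hm := hf' m
            rcases le_total (f (m + 1)) (1 + f' m) with hc | hc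
            · rw [min_eq_left hc] at hm; omega
            · rw [min_eq_right hc] at hm; omega
          have hga : g' (m + 1) = f' (m + 1) := g'_inc hmono hle hf'0 hf' hg' m hstep
          have h4 := g'_le hmono hle hf'0 hf' hg' (m + 1 - i)
          have h5 : f' (m + 1 - i) ≤ f' m := hf'mono (by omega)
          omega
      have : mex T = g' n := mex_eq_of haT (fun j hj => hTsub (hlow j hj))
      rw [hgT, this]

end
end
end

section
/- Let g, h : ℕ → ℕ be fractal sequences. If for every natural number k the position of the first occurrence of k in g equals the position of the first occurrence of k in h, then g = h. -/
open Classical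

noncomputable section

lemma firstOcc_spec (g : ℕ → ℕ) (hg : Infinitive g) (k : ℕ) : g (firstOcc g k) = k :=
  Nat.sInf_mem (hg k).nonempty

lemma notFirst_iff (g : ℕ → ℕ) (hg : Infinitive g) (n : ℕ) :
    NotFirst g n ↔ ¬ ∃ k, firstOcc g k = n := by
  constructor
  · rintro ⟨m, hm, hgm⟩ ⟨k, hk⟩
    have h1 : g n = k := by rw [← hk, firstOcc_spec g hg k]
    have h2 : firstOcc g (g n) ≤ m := Nat.sInf_le hgm
    rw [h1, hk] at h2; omega
  · intro hne
    have hle : firstOcc g (g n) ≤ n := Nat.sInf_le rfl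
    have hlt : firstOcc g (g n) < n := lt_of_le_of_ne hle (fun e => hne ⟨g n, e⟩)
    exact ⟨firstOcc g (g n), hlt, firstOcc_spec g hg (g n)⟩

lemma notFirst_infinite (g : ℕ → ℕ) (hg : Infinitive g) : (setOf (NotFirst g)).Infinite := by
  have : ({n | g n = 0} \ {firstOcc g 0}).Infinite := (hg 0).diff (Set.finite_singleton _)
  apply this.mono
  rintro n ⟨h1, h2⟩
  have hle : firstOcc g 0 ≤ n := Nat.sInf_le h1
  have hne : n ≠ firstOcc g 0 := h2
  refine ⟨firstOcc g 0, by omega, ?_⟩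
  rw [firstOcc_spec g hg 0, h1]

lemma strictMono_lt_self (f : ℕ → ℕ) (hf : StrictMono f) (h0 : f 0 ≠ 0) (m : ℕ) : m < f m := by
  induction m with
  | zero => omega
  | succ m ih => exact lt_of_le_of_lt (Nat.succ_le_of_lt ih) (hf (Nat.lt_succ_self m))

/-- a fractal sequence is determined by its first-occurrence positions. -/
theorem fractal_eq_of_firstOcc_eq (g h : ℕ → ℕ) (hg : Fractal g) (hh : Fractal h)
    (heq : ∀ k, firstOcc g k = firstOcc h k) : g = h := by
  obtain ⟨hgi, _, hgL⟩ := hg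
  obtain ⟨hhi, _, hhL⟩ := hh
  have hNF : NotFirst g = NotFirst h := by
    funext n
    rw [show (NotFirst g n = NotFirst h n) ↔ (NotFirst g n ↔ NotFirst h n) from
      ⟨fun e => e ▸ Iff.rfl, propext⟩]
    rw [notFirst_iff g hgi, notFirst_iff h hhi]
    simp only [heq]
  funext n
  induction n using Nat.strong_induction_on with
  | _ n IH =>
    by_cases hf : ∃ k, firstOcc g k = n
    · obtain ⟨k, hk⟩ := hf
      have h1 : g n = k := by rw [← hk, firstOcc_spec g hgi]
      have hk' : firstOcc h k = n := by rw [← heq]; exact hk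
      have h2 : h n = k := by rw [← hk', firstOcc_spec h hhi]
      rw [h1, h2]
    · have hn : NotFirst g n := (notFirst_iff g hgi n).mpr hf
      have hinf : (setOf (NotFirst g)).Infinite := notFirst_infinite g hgi
      set m := Nat.count (NotFirst g) n with hm
      have hnth : Nat.nth (NotFirst g) m = n := Nat.nth_count hn
      have h00 : ¬ NotFirst g 0 := by rintro ⟨a, ha, -⟩; omega
      have h0 : Nat.nth (NotFirst g) 0 ≠ 0 := by
        intro e
        exact h00 (e ▸ Nat.nth_mem_of_infinite hinf 0)
      have hmn : m < n := hnth ▸ strictMono_lt_self _ (Nat.nth_strictMono hinf) h0 m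
      have hg_eq : g n = g m := by rw [← hnth]; exact hgL m
      have hh_eq : h n = h m := by
        have : Nat.nth (NotFirst h) m = n := by rw [← hNF]; exact hnth
        rw [← this]; exact hhL m
      rw [hg_eq, hh_eq]
      exact IH m hmn
end
end

section
/- Let g be a fractal sequence and ĝ(j) the position of the first occurrence of j in g. Then ĝ(j) = 1 + ∑_{i=0}^{j-1} s(i,j), where s(i,j) counts occurrences of i strictly before position ĝ(j), not counting the occurrence g(0) = 0 when i = 0. -/
open Classical

noncomputable section

/-!
By (F2), every term before the first occurrence `ĝ(j)` of `j` is smaller than `j`: a term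
`g n ≥ j` would have its own first occurrence at or after `ĝ(j)`. So the positions
`0, …, ĝ(j) - 1` split by value into the classes `i < j`, and the class of `i` has
`s(i,j)` elements, except that the class of `0` also holds the position `0`.
-/

open Finset

theorem firstOcc_apply_le (g : ℕ → ℕ) (n : ℕ) : firstOcc g (g n) ≤ n :=
  Nat.sInf_le rfl

theorem striangle_eq_card_filter (g : ℕ → ℕ) (i j : ℕ) :
    striangle g i j = #{n ∈ range (firstOcc g j) | g n = i ∧ (i = 0 → n ≠ 0)} := by
  rw [striangle, ← Set.ncard_coe_finset]
  congr 1
  ext n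
  simp only [coe_filter, mem_range, Set.mem_ofPred_eq]
  tauto

theorem striangle_of_ne_zero (g : ℕ → ℕ) {i : ℕ} (hi : i ≠ 0) (j : ℕ) :
    striangle g i j = #{n ∈ range (firstOcc g j) | g n = i} := by
  simp only [striangle_eq_card_filter, hi, IsEmpty.forall_iff, and_true]

theorem striangle_zero_add_one {g : ℕ → ℕ} (h0 : g 0 = 0) {j : ℕ} (hj : 0 < firstOcc g j) :
    striangle g 0 j + 1 = #{n ∈ range (firstOcc g j) | g n = 0} := by
  have herase : {n ∈ range (firstOcc g j) | g n = 0 ∧ (0 = 0 → n ≠ 0)} =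
      ({n ∈ range (firstOcc g j) | g n = 0} : Finset ℕ).erase 0 := by
    ext n
    simp only [mem_filter, mem_erase, mem_range]
    tauto
  rw [striangle_eq_card_filter, herase, card_erase_add_one (by simp [hj, h0])]

section StrictMono

variable {g : ℕ → ℕ}

theorem apply_lt_of_lt_firstOcc (hg : StrictMono (firstOcc g)) {j n : ℕ}
    (hn : n < firstOcc g j) : g n < j := by
  by_contra! h
  exact (hg.monotone h).trans (firstOcc_apply_le g n) |>.not_gt hn

theorem apply_zero_eq_zero (hg : StrictMono (firstOcc g)) : g 0 = 0 :=
  Nat.le_zero.1 <| hg.le_iff_le.1 <| (firstOcc_apply_le g 0).trans (Nat.zero_le _)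

theorem firstOcc_pos (hg : StrictMono (firstOcc g)) {j : ℕ} (hj : 0 < j) : 0 < firstOcc g j :=
  (Nat.zero_le _).trans_lt (hg hj)

theorem firstOcc_eq_sum_card_filter (hg : StrictMono (firstOcc g)) (j : ℕ) :
    firstOcc g j = ∑ i ∈ range j, #{n ∈ range (firstOcc g j) | g n = i} := by
  simpa using card_eq_sum_card_fiberwise
    fun n hn => mem_range.2 (apply_lt_of_lt_firstOcc hg (mem_range.1 hn))

end StrictMono

/-- for a fractal sequence, the first occurrence of `j` is at position
`1 + ∑_{i<j} s(i,j)`. -/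
theorem fractal_firstOcc_eq_column_sum (g : ℕ → ℕ) (hg : Fractal g) :
    ∀ j, 1 ≤ j → firstOcc g j = 1 + ∑ i ∈ Finset.range j, striangle g i j := by
  have hmono : StrictMono (firstOcc g) := fun _ _ h => hg.2.1 _ _ h
  intro j hj
  have h0 : 0 ∈ range j := mem_range.2 hj
  rw [firstOcc_eq_sum_card_filter hmono j, ← add_sum_erase _ _ h0, ← add_sum_erase _ _ h0,
    ← striangle_zero_add_one (apply_zero_eq_zero hmono) (firstOcc_pos hmono hj),
    sum_congr rfl fun i hi => striangle_of_ne_zero g (ne_of_mem_erase hi) j]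
  ring
end
end

section
/- Let f be a regular sequence with n - f(n) → ∞, and let h be the Grundy sequence for Minimum Nim with rule f: h(n) = mex { h(i) : 0 ≤ i ≤ n - f(n) - 1 }. Then h is regular (h(n-1) ≤ h(n) ≤ h(n-1) + 1), ĥ(0) = 0, and ĥ(n) = q(ĥ(n-1)) for n ≥ 1, where q(k) = min { j : j - f(j) > k } and ĥ(n) is the first index at which h takes the value n. -/
open Classical

noncomputable section

lemma mex_Iio (t : ℕ) : mex (Set.Iio t) = t := by
  unfold mex
  have : {v | v ∉ Set.Iio t} = Set.Ici t := by ext v; simp [not_lt]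
  rw [this]
  exact csInf_Ici

lemma ivt (h : ℕ → ℕ) (h0 : h 0 = 0) :
    ∀ N, (∀ k < N, h (k+1) ≤ h k + 1) → ∀ v ≤ h N, ∃ i ≤ N, h i = v := by
  intro N
  induction N with
  | zero => intro _ v hv; exact ⟨0, le_rfl, by omega⟩
  | succ N ih =>
    intro hstep v hv
    by_cases hc : v ≤ h N
    · obtain ⟨i, hi, he⟩ := ih (fun k hk => hstep k (by omega)) v hc
      exact ⟨i, by omega, he⟩
    · have := hstep N (by omega)
      exact ⟨N+1, le_rfl, by omega⟩

lemma first_min (h : ℕ → ℕ) (v j : ℕ) (hj : j < firstOcc h v) : h j ≠ v := by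
  unfold firstOcc at hj
  exact fun he => absurd he (Nat.notMem_of_lt_sInf (s := {n | h n = v}) hj)

/-- solution of Minimum Nim with a regular rule `f` satisfying
`n - f n → ∞`: the Grundy sequence `h` is regular, `ĥ 0 = 0` and
`ĥ n = q (ĥ (n-1))` where `q k = min { j : j - f j > k }`. -/
theorem minNim_solution (f h : ℕ → ℕ) (hf : Regular f)
    (hlim : Filter.Tendsto (fun n => n - f n) Filter.atTop Filter.atTop)
    (hh : MinNimGrundy f h) :
    (∀ n, h n ≤ h (n + 1) ∧ h (n + 1) ≤ h n + 1) ∧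
    firstOcc h 0 = 0 ∧
    ∀ n, 1 ≤ n → firstOcc h n = sInf {j | firstOcc h (n - 1) < j - f j} := by
  obtain ⟨hf0, hfle, hfstep⟩ := hf
  set d : ℕ → ℕ := fun n => n - f n with hd
  have hd0 : d 0 = 0 := by simp [hd, hf0]
  have hdmono : ∀ n, d n ≤ d (n+1) ∧ d (n+1) ≤ d n + 1 := by
    intro n
    have h1 := hfle n; have h2 := hfle (n+1); have h3 := hfstep n
    simp only [hd]; omega
  have hdle : ∀ n, d n ≤ n := fun n => Nat.sub_le n (f n)
  have hh' : ∀ n, h n = mex {v | ∃ i, i < d n ∧ h i = v} := by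
    intro n
    rw [hh n]
    congr 1
    ext v
    simp only [Set.mem_setOf_eq, hd]
    constructor
    · rintro ⟨i, hi, he⟩; exact ⟨i, by omega, he⟩
    · rintro ⟨i, hi, he⟩; exact ⟨i, by omega, he⟩
  have hempty : {v | ∃ i, i < 0 ∧ h i = v} = Set.Iio 0 := by ext v; simp
  have h0 : h 0 = 0 := by
    rw [hh' 0, hd0, hempty, mex_Iio]
  have key : ∀ n, h n ≤ h (n + 1) ∧ h (n + 1) ≤ h n + 1 := by
    intro n
    induction n using Nat.strong_induction_on with
    | _ n IH =>
      have mono : ∀ b, b ≤ n → ∀ a, a ≤ b → h a ≤ h b := by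
        intro b
        induction b with
        | zero =>
          intro _ a ha
          have : a = 0 := by omega
          subst this; exact le_rfl
        | succ b ihb =>
          intro hb a ha
          rcases Nat.lt_or_ge a (b+1) with hc | hc
          · exact le_trans (ihb (by omega) a (by omega)) (IH b (by omega)).1
          · have : a = b + 1 := by omega
            subst this; exact le_rfl
      have hval : ∀ m, m ≤ n + 1 →
          mex {v | ∃ i, i < m ∧ h i = v} = if m = 0 then 0 else h (m-1) + 1 := by
        intro m hm
        rcases Nat.eq_zero_or_pos m with h0m | h0m
        · subst h0m
          rw [if_pos rfl, hempty, mex_Iio]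
        · have hset : {v | ∃ i, i < m ∧ h i = v} = Set.Iio (h (m-1) + 1) := by
            ext v
            simp only [Set.mem_setOf_eq, Set.mem_Iio]
            constructor
            · rintro ⟨i, hi, rfl⟩
              have := mono (m-1) (by omega) i (by omega)
              omega
            · intro hv
              obtain ⟨i, hi, he⟩ := ivt h h0 (m-1) (fun k hk => (IH k (by omega)).2) v (by omega)
              exact ⟨i, by omega, he⟩
          rw [hset, mex_Iio, if_neg (by omega)]
      have e1 : h n = if d n = 0 then 0 else h (d n - 1) + 1 := by
        rw [hh' n]; exact hval (d n) (by have := hdle n; omega)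
      have e2 : h (n+1) = if d (n+1) = 0 then 0 else h (d (n+1) - 1) + 1 := by
        rw [hh' (n+1)]; exact hval (d (n+1)) (hdle (n+1))
      obtain ⟨hm1, hm2⟩ := hdmono n
      rcases Nat.eq_or_lt_of_le hm1 with heq | hlt
      · rw [e1, e2, ← heq]
        exact ⟨le_rfl, by omega⟩
      · have heq : d (n+1) = d n + 1 := by omega
        rw [e1, e2, heq]
        rcases Nat.eq_zero_or_pos (d n) with hz | hz
        · rw [hz]
          simp [h0]
        · rw [if_neg (by omega), if_neg (by omega)]
          have hdd : d n + 1 - 1 = d n := by omega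
          rw [hdd]
          have hs := IH (d n - 1) (by have := hdle n; omega)
          have hdd2 : d n - 1 + 1 = d n := by omega
          rw [hdd2] at hs
          omega
  have mono : Monotone h := monotone_nat_of_le_succ (fun n => (key n).1)
  have hform : ∀ n, 1 ≤ d n → h n = h (d n - 1) + 1 := by
    intro n hdn
    rw [hh' n]
    have hset : {v | ∃ i, i < d n ∧ h i = v} = Set.Iio (h (d n - 1) + 1) := by
      ext v
      simp only [Set.mem_setOf_eq, Set.mem_Iio]
      constructor
      · rintro ⟨i, hi, rfl⟩
        have := mono (show i ≤ d n - 1 by omega)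
        omega
      · intro hv
        obtain ⟨i, hi, he⟩ := ivt h h0 (d n - 1) (fun k _ => (key k).2) v (by omega)
        exact ⟨i, by omega, he⟩
    rw [hset, mex_Iio]
  have hform0 : ∀ n, d n = 0 → h n = 0 := by
    intro n hdn
    rw [hh' n, hdn, hempty, mex_Iio]
  have hfirst0 : firstOcc h 0 = 0 := by
    unfold firstOcc
    exact Nat.sInf_eq_zero.mpr (Or.inl h0)
  have main : ∀ n, h (firstOcc h n) = n ∧
      (∀ k, n = k + 1 → firstOcc h n = sInf {j | firstOcc h k < d j}) := by
    intro n
    induction n with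
    | zero =>
      refine ⟨by rw [hfirst0]; exact h0, ?_⟩
      intro k hk
      exact absurd hk (by omega)
    | succ n ih =>
      have hkfirst := ih.1
      set k := firstOcc h n with hk
      have hTne : {j | k < d j}.Nonempty := by
        obtain ⟨j, hj⟩ := (hlim.eventually (Filter.eventually_gt_atTop k)).exists
        exact ⟨j, by simpa [hd] using hj⟩
      set t := sInf {j | k < d j} with ht
      have htmem : k < d t := Nat.sInf_mem hTne
      have ht0 : t ≠ 0 := by
        intro h'
        rw [h', hd0] at htmem
        omega
      have hnotmem : ¬ (k < d (t-1)) :=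
        Nat.notMem_of_lt_sInf (s := {j | k < d j}) (by rw [← ht]; omega)
      have hdt : d t = k + 1 := by
        have h2 := (hdmono (t-1)).2
        have htt : t - 1 + 1 = t := by omega
        rw [htt] at h2
        omega
      have hht : h t = n + 1 := by
        rw [hform t (by omega), hdt]
        simp only [Nat.add_sub_cancel]
        omega
      have hlow : ∀ j, j < t → h j < n + 1 := by
        intro j hj
        have hjd : ¬ (k < d j) :=
          Nat.notMem_of_lt_sInf (s := {j | k < d j}) (by rw [← ht]; exact hj)
        rcases Nat.eq_zero_or_pos (d j) with hz | hz
        · rw [hform0 j hz]; omega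
        · rw [hform j hz]
          have h1 : d j - 1 < k := by omega
          have h2 : h (d j - 1) ≠ n := first_min h n (d j - 1) h1
          have h3 : h (d j - 1) ≤ n := by
            have := mono (show d j - 1 ≤ k by omega)
            omega
          omega
      have hfirst : firstOcc h (n+1) = t := by
        unfold firstOcc
        apply le_antisymm
        · exact Nat.sInf_le (show t ∈ {m | h m = n + 1} from hht)
        · apply le_csInf (Set.nonempty_of_mem (show t ∈ {m | h m = n + 1} from hht))
          intro b hb
          by_contra hbt
          push_neg at hbt
          have hb' : h b = n + 1 := hb
          have := hlow b hbt
          omega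
      refine ⟨by rw [hfirst]; exact hht, ?_⟩
      intro k' hk'
      have hk'' : k' = n := by omega
      subst hk''
      rw [hfirst, ← hk]
  refine ⟨key, hfirst0, ?_⟩
  intro n hn
  obtain ⟨m, rfl⟩ : ∃ m, n = m + 1 := ⟨n - 1, by omega⟩
  have hm := (main (m+1)).2 m rfl
  simpa [hd] using hm
end
end

section
/- Let f be a regular sequence with n - f(n) → ∞, let g be the Grundy sequence for Maximum Nim with rule f, and define q(k) = min { j : j - f(j) > k }. Then g(q(n)) = g(n) for all n. -/
open Classical

noncomputable section

lemma mex_lt_mem {S : Set ℕ} {v : ℕ} (h : v < mex S) : v ∈ S := by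
  by_contra hv
  exact absurd (Nat.sInf_le hv) (not_le.mpr h)

lemma mex_not_mem {S : Set ℕ} (h : S.Finite) : mex S ∉ S := by
  have hne : {v | v ∉ S}.Nonempty := h.infinite_compl.nonempty
  exact Nat.sInf_mem hne

lemma mex_eq_of_s17 {S : Set ℕ} {k : ℕ} (hk : k ∉ S) (h : ∀ v < k, v ∈ S) : mex S = k := by
  refine le_antisymm (Nat.sInf_le hk) ?_
  by_contra hc
  push_neg at hc
  have hmem : mex S ∈ {v | v ∉ S} := Nat.sInf_mem ⟨k, hk⟩
  exact hmem (h _ hc)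

lemma windowFinite (f g : ℕ → ℕ) (n : ℕ) :
    {v | ∃ i, 1 ≤ i ∧ i ≤ f n ∧ g (n - i) = v}.Finite := by
  have hsub : {v | ∃ i, 1 ≤ i ∧ i ≤ f n ∧ g (n - i) = v}
      ⊆ (fun i => g (n - i)) '' (Set.Icc 1 (f n)) := by
    rintro v ⟨i, h1, h2, rfl⟩
    exact ⟨i, ⟨h1, h2⟩, rfl⟩
  exact Set.Finite.subset ((Set.finite_Icc 1 (f n)).image _) hsub

def qfun (f : ℕ → ℕ) (k : ℕ) : ℕ := sInf {j | k < j - f j}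

lemma maxNim_aux (f g : ℕ → ℕ) (hf : Regular f)
    (hlim : Filter.Tendsto (fun n => n - f n) Filter.atTop Filter.atTop)
    (hg : MaxNimGrundy f g) :
    ∀ n, g (qfun f n) = g n := by
  obtain ⟨hf0, hfle, hfstep⟩ := hf
  have hmono : Monotone (fun j => j - f j) := by
    apply monotone_nat_of_le_succ
    intro j
    have h1 := (hfstep j).2
    have h2 := hfle j
    show j - f j ≤ j + 1 - f (j + 1)
    omega
  have hne : ∀ k, {j | k < j - f j}.Nonempty := by
    intro k
    obtain ⟨j, hj⟩ := (hlim.eventually_gt_atTop k).exists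
    exact ⟨j, hj⟩
  have hq_mem : ∀ k, k < qfun f k - f (qfun f k) := fun k => Nat.sInf_mem (hne k)
  have hq_min : ∀ k j, j < qfun f k → j - f j ≤ k := by
    intro k j hj
    by_contra h
    push_neg at h
    have hle : qfun f k ≤ j := Nat.sInf_le (show j ∈ {j | k < j - f j} from h)
    omega
  have hq_eq : ∀ k, qfun f k - f (qfun f k) = k + 1 := by
    intro k
    have h1 := hq_mem k
    rcases Nat.eq_zero_or_pos (qfun f k) with h0 | h0
    · rw [h0, hf0] at h1; omega
    · have h2 := hq_min k (qfun f k - 1) (by omega)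
      have h3 := (hfstep (qfun f k - 1)).1
      rw [show qfun f k - 1 + 1 = qfun f k by omega] at h3
      have h5 := hfle (qfun f k - 1)
      have h6 := hfle (qfun f k)
      omega
  intro n
  induction n using Nat.strong_induction_on with
  | _ n IH =>
    -- (a): g m ≠ g n for n < m < q n
    have ha : ∀ m, n < m → m < qfun f n → g m ≠ g n := by
      intro m h1 h2 heq
      have hdm : m - f m ≤ n := hq_min n m h2
      have hfm := hfle m
      have hmem : g n ∈ {v | ∃ i, 1 ≤ i ∧ i ≤ f m ∧ g (m - i) = v} := by
        refine ⟨m - n, by omega, by omega, ?_⟩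
        congr 1
        omega
      have hnot : g m ∉ {v | ∃ i, 1 ≤ i ∧ i ≤ f m ∧ g (m - i) = v} := by
        rw [hg m]
        exact mex_not_mem (windowFinite f g m)
      rw [heq] at hnot
      exact hnot hmem
    -- (b): every v < g n appears strictly between n and q n
    have hb : ∀ v, v < g n → ∃ m, n < m ∧ m < qfun f n ∧ g m = v := by
      intro v hv
      rw [hg n] at hv
      obtain ⟨i, hi1, hi2, hgv⟩ := mex_lt_mem hv
      have hfn := hfle n
      have h0 : n - i < n := by omega
      have IH0 : g (qfun f (n - i)) = g (n - i) := IH (n - i) h0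
      refine ⟨qfun f (n - i), ?_, ?_, by rw [IH0]; exact hgv⟩
      · by_contra hc
        push_neg at hc
        have hmm := hq_mem (n - i)
        have hmo : qfun f (n - i) - f (qfun f (n - i)) ≤ n - f n := hmono hc
        omega
      · have e1 := hq_eq (n - i)
        have e2 := hq_eq n
        have hle : qfun f (n - i) ≤ qfun f n := by
          apply Nat.sInf_le
          show n - i < qfun f n - f (qfun f n)
          omega
        rcases lt_or_eq_of_le hle with h | h
        · exact h
        · exfalso; rw [h] at e1; omega
    rw [hg (qfun f n)]
    apply mex_eq_of_s17
    · rintro ⟨i, hi1, hi2, hgi⟩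
      have e := hq_eq n
      have hfq := hfle (qfun f n)
      exact ha (qfun f n - i) (by omega) (by omega) hgi
    · intro v hv
      obtain ⟨m, h1, h2, h3⟩ := hb v hv
      have e := hq_eq n
      have hfq := hfle (qfun f n)
      refine ⟨qfun f n - m, by omega, by omega, ?_⟩
      rw [show qfun f n - (qfun f n - m) = m by omega]
      exact h3

/-- `g (q n) = g n`, where `q k = min { j : j - f j > k }`. -/
theorem maxNim_q_invariance (f g : ℕ → ℕ) (hf : Regular f)
    (hlim : Filter.Tendsto (fun n => n - f n) Filter.atTop Filter.atTop)
    (hg : MaxNimGrundy f g) :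
    ∀ n, g (sInf {j | n < j - f j}) = g n := by
  exact maxNim_aux f g hf hlim hg
end
end
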